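/- If 𝓝 is a standard Gaussian random variable, then for every t ≥ 0 the Laplace transform of 𝓝^{−2} is E[exp(−t 𝓝^{−2})] = exp(−√(2t)). -/

import Mathlib

/-!
Completing the square, `φ(x) e^{-t/x²} = e^{-c} φ(x - c/x)` with `c = √(2t)` and `φ` the standard
Gaussian density. The map `x ↦ x - c/x` is a bijection from `(0, ∞)` onto `ℝ` with Jacobian
`1 + c/x²`, and the inversion `x ↦ c/x` turns `∫₀^∞ (c/x²) h(x) dx` into `∫₀^∞ h(x) dx` whenever
`h(c/x) = h(x)`. For even `g` this gives `2 ∫₀^∞ g(x - c/x) dx = ∫ g` (Cauchy–Schlömilch), so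
`E[e^{-t/𝓝²}] = 2 ∫₀^∞ φ(x) e^{-t/x²} dx = e^{-c} ∫ φ = e^{-c}`.
-/

open MeasureTheory ProbabilityTheory Set Real

section ChangeOfVariables

variable {E : Type*} [NormedAddCommGroup E] [NormedSpace ℝ E] {c : ℝ}

lemma hasDerivAt_sub_div (c : ℝ) {x : ℝ} (hx : x ≠ 0) :
    HasDerivAt (fun x : ℝ => x - c / x) (1 + c / x ^ 2) x := by
  have := (hasDerivAt_id' x).sub ((hasDerivAt_inv hx).const_mul c)
  simp only [← div_eq_mul_inv, mul_neg, sub_neg_eq_add] at this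
  exact this

lemma hasDerivAt_const_div (c : ℝ) {x : ℝ} (hx : x ≠ 0) :
    HasDerivAt (fun x : ℝ => c / x) (-(c / x ^ 2)) x := by
  simpa [← div_eq_mul_inv] using (hasDerivAt_inv hx).const_mul c

lemma injOn_sub_div (hc : 0 ≤ c) : InjOn (fun x : ℝ => x - c / x) (Ioi 0) := by
  intro x (hx : 0 < x) y (hy : 0 < y) hxy
  have : (x - y) * (x * y + c) = 0 := by
    field_simp at hxy
    linear_combination hxy
  rcases mul_eq_zero.1 this with h | h
  · linarith
  · nlinarith [mul_pos hx hy]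

lemma image_sub_div_Ioi (hc : 0 < c) : (fun x : ℝ => x - c / x) '' Ioi 0 = univ := by
  refine eq_univ_of_forall fun u => ?_
  -- the positive root of `x ^ 2 - u x - c`
  set s := √(u ^ 2 + 4 * c)
  have hs : s ^ 2 = u ^ 2 + 4 * c := sq_sqrt (by positivity)
  have hus : 0 < u + s := by nlinarith [sqrt_nonneg (u ^ 2 + 4 * c)]
  refine ⟨(u + s) / 2, by simpa using hus, ?_⟩
  field_simp
  linear_combination hs

lemma injOn_const_div (hc : c ≠ 0) : InjOn (fun x : ℝ => c / x) (Ioi 0) := fun x _ y _ hxy => by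
  simp only [div_eq_mul_inv, mul_right_inj' hc, inv_inj] at hxy
  exact hxy

lemma image_const_div_Ioi (hc : 0 < c) : (fun x : ℝ => c / x) '' Ioi 0 = Ioi 0 := by
  refine Subset.antisymm ?_ fun y (hy : 0 < y) => ⟨c / y, div_pos hc hy, by field_simp⟩
  rintro _ ⟨x, hx, rfl⟩
  exact div_pos hc hx

lemma integral_Ioi_comp_sub_div (hc : 0 < c) (g : ℝ → E) :
    ∫ x in Ioi 0, (1 + c / x ^ 2) • g (x - c / x) = ∫ u, g u := by
  have h := integral_image_eq_integral_abs_deriv_smul measurableSet_Ioi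
    (fun x (hx : 0 < x) => (hasDerivAt_sub_div c hx.ne').hasDerivWithinAt) (injOn_sub_div hc.le) g
  rw [image_sub_div_Ioi hc, Measure.restrict_univ] at h
  rw [h]
  refine setIntegral_congr_fun measurableSet_Ioi fun x (hx : 0 < x) => ?_
  rw [abs_of_pos (by positivity)]

lemma integrableOn_Ioi_comp_sub_div (hc : 0 < c) {g : ℝ → E} (hg : Integrable g) :
    IntegrableOn (fun x => (1 + c / x ^ 2) • g (x - c / x)) (Ioi 0) := by
  have h := (integrableOn_image_iff_integrableOn_abs_deriv_smul measurableSet_Ioi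
    (fun x (hx : 0 < x) => (hasDerivAt_sub_div c hx.ne').hasDerivWithinAt)
    (injOn_sub_div hc.le) g).1 (by rwa [image_sub_div_Ioi hc, integrableOn_univ])
  refine (integrableOn_congr_fun (fun x (hx : 0 < x) => ?_) measurableSet_Ioi).1 h
  rw [abs_of_pos (by positivity)]

lemma integral_Ioi_comp_const_div (hc : 0 < c) (g : ℝ → E) :
    ∫ x in Ioi 0, (c / x ^ 2) • g (c / x) = ∫ x in Ioi 0, g x := by
  have h := integral_image_eq_integral_abs_deriv_smul measurableSet_Ioi
    (fun x (hx : 0 < x) => (hasDerivAt_const_div c hx.ne').hasDerivWithinAt)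
    (injOn_const_div hc.ne') g
  rw [image_const_div_Ioi hc] at h
  rw [h]
  refine setIntegral_congr_fun measurableSet_Ioi fun x (hx : 0 < x) => ?_
  rw [abs_neg, abs_of_pos (by positivity)]

theorem two_mul_integral_Ioi_comp_sub_div (hc : 0 < c) {g : ℝ → E} (hg : Integrable g)
    (heven : ∀ u, g (-u) = g u) :
    (2 : ℝ) • ∫ x in Ioi 0, g (x - c / x) = ∫ u, g u := by
  set h : ℝ → E := fun x => g (x - c / x)
  have hsymm : ∀ x ∈ Ioi (0 : ℝ), h (c / x) = h x := fun x (hx : 0 < x) => by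
    change g _ = g _
    rw [← heven]
    congr 1
    field_simp
    ring
  have hint := integrableOn_Ioi_comp_sub_div hc hg
  have hh : IntegrableOn h (Ioi 0) := by
    refine (integrableOn_congr_fun (fun x (hx : 0 < x) => ?_) measurableSet_Ioi).1
      (hint.bdd_smul 1 (φ := fun x => (1 + c / x ^ 2)⁻¹)
        (by fun_prop : Measurable _).aestronglyMeasurable ?_)
    · exact inv_smul_smul₀ (by positivity) _
    · filter_upwards [ae_restrict_mem measurableSet_Ioi] with x (hx : 0 < x)
      rw [norm_inv, Real.norm_of_nonneg (by positivity)]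
      exact inv_le_one_of_one_le₀ (le_add_of_nonneg_right (by positivity))
  have hh' : IntegrableOn (fun x => (c / x ^ 2) • h x) (Ioi 0) :=
    (integrableOn_congr_fun (fun x _ => by simp [h, add_smul]) measurableSet_Ioi).1 (hint.sub hh)
  calc (2 : ℝ) • ∫ x in Ioi 0, h x
      = (∫ x in Ioi 0, h x) + ∫ x in Ioi 0, (c / x ^ 2) • h x := by
        rw [two_smul, ← integral_Ioi_comp_const_div hc h]
        congr 1
        exact setIntegral_congr_fun measurableSet_Ioi fun x hx => by rw [hsymm x hx]
    _ = ∫ x in Ioi 0, (1 + c / x ^ 2) • h x := by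
        rw [← integral_add hh hh']
        exact setIntegral_congr_fun measurableSet_Ioi fun x _ => by simp [add_smul]
    _ = ∫ u, g u := integral_Ioi_comp_sub_div hc g

end ChangeOfVariables

lemma gaussianPDFReal_mul_exp_neg_mul_inv_sq {t x : ℝ} (ht : 0 ≤ t) (hx : x ≠ 0) :
    gaussianPDFReal 0 1 x * exp (-(t * (x ^ 2)⁻¹))
      = exp (-√(2 * t)) * gaussianPDFReal 0 1 (x - √(2 * t) / x) := by
  have hc : √(2 * t) ^ 2 = 2 * t := sq_sqrt (by positivity)
  simp only [gaussianPDFReal, sub_zero, NNReal.coe_one, mul_one]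
  rw [mul_left_comm, mul_assoc, ← exp_add, ← exp_add]
  congr 2
  field_simp
  linear_combination hc

lemma integral_exp_neg_mul_inv_sq_gaussianReal {t : ℝ} (ht : 0 ≤ t) :
    ∫ x, exp (-(t * (x ^ 2)⁻¹)) ∂gaussianReal 0 1 = exp (-√(2 * t)) := by
  rcases ht.eq_or_lt with rfl | ht
  · simp
  set c := √(2 * t)
  have hc : 0 < c := by positivity
  have heven : ∀ u, gaussianPDFReal 0 1 (-u) = gaussianPDFReal 0 1 u := by
    simp [gaussianPDFReal]
  rw [integral_gaussianReal_eq_integral_smul one_ne_zero]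
  calc ∫ x, gaussianPDFReal 0 1 x • exp (-(t * (x ^ 2)⁻¹))
      = ∫ x, (fun y => gaussianPDFReal 0 1 y * exp (-(t * (y ^ 2)⁻¹))) |x| := by
        simp [gaussianPDFReal, sq_abs]
    _ = 2 * ∫ x in Ioi 0, exp (-c) * gaussianPDFReal 0 1 (x - c / x) := by
        rw [integral_comp_abs (f := fun y => gaussianPDFReal 0 1 y * exp (-(t * (y ^ 2)⁻¹)))]
        congr 1
        exact setIntegral_congr_fun measurableSet_Ioi fun x (hx : 0 < x) =>
          gaussianPDFReal_mul_exp_neg_mul_inv_sq ht.le hx.ne'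
    _ = exp (-c) * (2 : ℝ) • ∫ x in Ioi 0, gaussianPDFReal 0 1 (x - c / x) := by
        rw [integral_const_mul, smul_eq_mul]
        ring
    _ = exp (-c) := by
        rw [two_mul_integral_Ioi_comp_sub_div hc (integrable_gaussianPDFReal 0 1) heven,
          integral_gaussianPDFReal_eq_one 0 one_ne_zero, mul_one]

theorem statement9_general
    {Ω : Type*} [MeasurableSpace Ω] (μ : Measure Ω)
    (N : Ω → ℝ)
    (hN : Measure.map N μ = gaussianReal 0 1) :
    ∀ t : ℝ, 0 ≤ t →
      ∫ ω, Real.exp (-(t * ((N ω) ^ 2)⁻¹)) ∂μ = Real.exp (-Real.sqrt (2 * t)) := by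
  intro t ht
  have hN_ae : AEMeasurable N μ := .of_map_ne_zero (by simp [hN, NeZero.ne])
  rw [← integral_map (f := fun x => exp (-(t * (x ^ 2)⁻¹))) hN_ae
    (by fun_prop : Measurable _).aestronglyMeasurable, hN]
  exact integral_exp_neg_mul_inv_sq_gaussianReal ht

/-- If `𝓝` is a standard Gaussian random variable, then for every `t ≥ 0` the
Laplace transform of `𝓝⁻²` is `E[exp(-t 𝓝⁻²)] = exp(-√(2t))`. -/
theorem statement9
    {Ω : Type*} [MeasurableSpace Ω] (μ : Measure Ω) [IsProbabilityMeasure μ]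
    (N : Ω → ℝ) (hNmeas : Measurable N)
    (hN : Measure.map N μ = gaussianReal 0 1) :
    ∀ t : ℝ, 0 ≤ t →
      ∫ ω, Real.exp (-(t * ((N ω) ^ 2)⁻¹)) ∂μ = Real.exp (-Real.sqrt (2 * t)) :=
  statement9_general μ N hN
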